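/- Let q = (B,i,j) ∈ 𝕄 and let ζ_ℝ = (ζ_ℝ^k) be a tuple of matrices ζ_ℝ^k ∈ End(V_k). If μ_ℝ(q)_k = ζ_ℝ^k and μ_ℂ(q)_k = 0 for every vertex k, then for every ξ ∈ ℂ the hyperkähler rotation q_ξ = HK_ξ(q) satisfies μ_ℝ(q_ξ)_k = (1 − |ξ|²)·ζ_ℝ^k and μ_ℂ(q_ξ)_k = −2i·ξ·ζ_ℝ^k for every vertex k. -/

import Mathlib

open Matrix Filter Topology

namespace QuiverCL

noncomputable section

variable {n : ℕ} {E : Type*}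

/-- Cast a matrix along equalities of vertices. -/
def castM2 (v : Fin n → ℕ) {a b a' b' : Fin n} (ea : a = a') (eb : b = b')
    (M : Matrix (Fin (v a)) (Fin (v b)) ℂ) : Matrix (Fin (v a')) (Fin (v b')) ℂ :=
  Matrix.reindex (finCongr (congrArg v ea)) (finCongr (congrArg v eb)) M

/-- The quiver representation space `𝕄`: a triple `(B, i, j)` of families of matrices,
`B h : V (src h) → V (tgt h)`, `i k : W k → V k`, `j k : V k → W k`
(matrices act on column vectors, so `Hom(V_a, V_b)` is `Matrix (Fin (v b)) (Fin (v a)) ℂ`). -/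
abbrev Rep (src tgt : E → Fin n) (v w : Fin n → ℕ) : Type _ :=
  (∀ h : E, Matrix (Fin (v (tgt h))) (Fin (v (src h))) ℂ)
  × (∀ k : Fin n, Matrix (Fin (v k)) (Fin (w k)) ℂ)
  × (∀ k : Fin n, Matrix (Fin (w k)) (Fin (v k)) ℂ)

/-- `ε(h) = 1` for `h ∈ Ω` and `ε(h) = -1` for `h ∈ Ω̄`. -/
def eps (Ω : E → Prop) [DecidablePred Ω] (h : E) : ℂ := if Ω h then 1 else -1

/-- The matrix `B_{h̄}` attached to the reversed edge, recast so that it is a matrix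
`V (tgt h) → V (src h)`. -/
def Bbar (src tgt : E → Fin n) (bar : E → E) (v w : Fin n → ℕ)
    (hbs : ∀ h, src (bar h) = tgt h) (hbt : ∀ h, tgt (bar h) = src h)
    (p : Rep src tgt v w) (h : E) : Matrix (Fin (v (src h))) (Fin (v (tgt h))) ℂ :=
  castM2 v (hbt h) (hbs h) (p.1 (bar h))

/-- The real moment map, componentwise:
`μ_ℝ(B,i,j)_k = (i/2)·[Σ_{in(h)=k} (B_h B_h† − B_{h̄}† B_{h̄}) + i_k i_k† − j_k† j_k]`. -/
def muR [Fintype E] (src tgt : E → Fin n) (bar : E → E) (v w : Fin n → ℕ)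
    (hbs : ∀ h, src (bar h) = tgt h) (hbt : ∀ h, tgt (bar h) = src h)
    (p : Rep src tgt v w) (k : Fin n) : Matrix (Fin (v k)) (Fin (v k)) ℂ :=
  (Complex.I / 2) •
    ((∑ h : E, if e : tgt h = k then
        castM2 v e e
          (p.1 h * (p.1 h)ᴴ -
            (Bbar src tgt bar v w hbs hbt p h)ᴴ * Bbar src tgt bar v w hbs hbt p h)
      else 0)
      + (p.2.1 k * (p.2.1 k)ᴴ - (p.2.2 k)ᴴ * p.2.2 k))

/-- The complex moment map, componentwise:
`μ_ℂ(B,i,j)_k = Σ_{in(h)=k} ε(h)·B_h B_{h̄} + i_k j_k`. -/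
def muC [Fintype E] (src tgt : E → Fin n) (bar : E → E) (Ω : E → Prop) [DecidablePred Ω]
    (v w : Fin n → ℕ)
    (hbs : ∀ h, src (bar h) = tgt h) (hbt : ∀ h, tgt (bar h) = src h)
    (p : Rep src tgt v w) (k : Fin n) : Matrix (Fin (v k)) (Fin (v k)) ℂ :=
  (∑ h : E, if e : tgt h = k then
      eps Ω h • castM2 v e e (p.1 h * Bbar src tgt bar v w hbs hbt p h)
    else 0)
    + p.2.1 k * p.2.2 k

/-- The hyperkähler rotation `HK_ξ(B,i,j) = (B_h − ε(h)·ξ·B_{h̄}†, i_k − ξ·j_k†, j_k + ξ·i_k†)`. -/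
def HK (src tgt : E → Fin n) (bar : E → E) (Ω : E → Prop) [DecidablePred Ω]
    (v w : Fin n → ℕ)
    (hbs : ∀ h, src (bar h) = tgt h) (hbt : ∀ h, tgt (bar h) = src h)
    (ξ : ℂ) (p : Rep src tgt v w) : Rep src tgt v w :=
  ⟨fun h => p.1 h - (eps Ω h * ξ) • (Bbar src tgt bar v w hbs hbt p h)ᴴ,
   fun k => p.2.1 k - ξ • (p.2.2 k)ᴴ,
   fun k => p.2.2 k + ξ • (p.2.1 k)ᴴ⟩

/-- The gauge action `g·(B,i,j) = (g_{in(h)} B_h g_{out(h)}⁻¹, g_k i_k, j_k g_k⁻¹)`. -/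
def gauge (src tgt : E → Fin n) (v w : Fin n → ℕ)
    (g : ∀ k : Fin n, Matrix (Fin (v k)) (Fin (v k)) ℂ) (p : Rep src tgt v w) :
    Rep src tgt v w :=
  ⟨fun h => g (tgt h) * p.1 h * (g (src h))⁻¹,
   fun k => g k * p.2.1 k,
   fun k => p.2.2 k * (g k)⁻¹⟩

/-- The infinitesimal gauge action `l_p(ξ) = (ξ_{in(h)} B_h − B_h ξ_{out(h)}, ξ_k i_k, −j_k ξ_k)`. -/
def lp (src tgt : E → Fin n) (v w : Fin n → ℕ)
    (p : Rep src tgt v w) (ξ : ∀ k : Fin n, Matrix (Fin (v k)) (Fin (v k)) ℂ) :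
    Rep src tgt v w :=
  ⟨fun h => ξ (tgt h) * p.1 h - p.1 h * ξ (src h),
   fun k => ξ k * p.2.1 k,
   fun k => -(p.2.2 k * ξ k)⟩

/-- The adjoint of the infinitesimal gauge action, componentwise:
`l_p^*(q)_k = Σ_{in(h)=k} (A_h B_h† − B_{h̄}† A_{h̄}) + I_k i_k† − j_k† J_k`. -/
def lpStar [Fintype E] (src tgt : E → Fin n) (bar : E → E) (v w : Fin n → ℕ)
    (hbs : ∀ h, src (bar h) = tgt h) (hbt : ∀ h, tgt (bar h) = src h)
    (p q : Rep src tgt v w) (k : Fin n) : Matrix (Fin (v k)) (Fin (v k)) ℂ :=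
  (∑ h : E, if e : tgt h = k then
      castM2 v e e
        (q.1 h * (p.1 h)ᴴ -
          (Bbar src tgt bar v w hbs hbt p h)ᴴ * Bbar src tgt bar v w hbs hbt q h)
    else 0)
    + (q.2.1 k * (p.2.1 k)ᴴ - (p.2.2 k)ᴴ * q.2.2 k)

/-- The hermitian inner product
`⟨q, q′⟩ = Σ_h Tr(A_h A′_h†) + Σ_k Tr(I_k I′_k†) + Σ_k Tr(J_k J′_k†)` on `𝕄`. -/
def innerRep [Fintype E] (src tgt : E → Fin n) (v w : Fin n → ℕ)
    (q q' : Rep src tgt v w) : ℂ :=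
  (∑ h : E, (q.1 h * (q'.1 h)ᴴ).trace)
    + (∑ k : Fin n, (q.2.1 k * (q'.2.1 k)ᴴ).trace)
    + (∑ k : Fin n, (q.2.2 k * (q'.2.2 k)ᴴ).trace)

/-- The complex symplectic form
`ω_ℂ(q, q′) = Σ_h ε(h)·Tr(A_h A′_{h̄}) + Σ_k Tr(I_k J′_k − I′_k J_k)`. -/
def omegaC [Fintype E] (src tgt : E → Fin n) (bar : E → E) (Ω : E → Prop) [DecidablePred Ω]
    (v w : Fin n → ℕ)
    (hbs : ∀ h, src (bar h) = tgt h) (hbt : ∀ h, tgt (bar h) = src h)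
    (q q' : Rep src tgt v w) : ℂ :=
  (∑ h : E, eps Ω h * (q.1 h * Bbar src tgt bar v w hbs hbt q' h).trace)
    + ∑ k : Fin n, ((q.2.1 k * q'.2.2 k).trace - (q'.2.1 k * q.2.2 k).trace)

/-- The scaling action `t∘(B,i,j)`: multiply the `Ω̄`-components and the `j`-components by `t`. -/
def scale (src tgt : E → Fin n) (Ω : E → Prop) [DecidablePred Ω] (v w : Fin n → ℕ)
    (t : ℂ) (p : Rep src tgt v w) : Rep src tgt v w :=
  ⟨fun h => if Ω h then p.1 h else t • p.1 h,
   fun k => p.2.1 k,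
   fun k => t • p.2.2 k⟩

/-- The second complex structure `J(m, m′) = (−(m′)†, m†)` on `𝕄 = 𝕄_Ω ⊕ 𝕄_Ω̄`. -/
def Jmap (src tgt : E → Fin n) (bar : E → E) (Ω : E → Prop) [DecidablePred Ω]
    (v w : Fin n → ℕ)
    (hbs : ∀ h, src (bar h) = tgt h) (hbt : ∀ h, tgt (bar h) = src h)
    (q : Rep src tgt v w) : Rep src tgt v w :=
  ⟨fun h => (-(eps Ω h)) • (Bbar src tgt bar v w hbs hbt q h)ᴴ,
   fun k => -((q.2.2 k)ᴴ),
   fun k => (q.2.1 k)ᴴ⟩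

/-- The point `p_A(ℏ)` of `𝕄`: for `h ∈ Ω` the `h`-component is `B⁰_h + A_h − ℏ·(B⁰_{h̄})†` and
for `h ∈ Ω̄` it is `ℏ⁻¹·(B⁰_h + A_h) + (B⁰_{h̄})†`; the `i`-components are
`i⁰_k + I_k − ℏ·(j⁰_k)†` and the `j`-components are `ℏ⁻¹·(j⁰_k + J_k) + (i⁰_k)†`. -/
def pA (src tgt : E → Fin n) (bar : E → E) (Ω : E → Prop) [DecidablePred Ω]
    (v w : Fin n → ℕ)
    (hbs : ∀ h, src (bar h) = tgt h) (hbt : ∀ h, tgt (bar h) = src h)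
    (p0 A : Rep src tgt v w) (ℏ : ℂ) : Rep src tgt v w :=
  ⟨fun h => if Ω h
      then p0.1 h + A.1 h - ℏ • (Bbar src tgt bar v w hbs hbt p0 h)ᴴ
      else ℏ⁻¹ • (p0.1 h + A.1 h) + (Bbar src tgt bar v w hbs hbt p0 h)ᴴ,
   fun k => p0.2.1 k + A.2.1 k - ℏ • (p0.2.2 k)ᴴ,
   fun k => ℏ⁻¹ • (p0.2.2 k + A.2.2 k) + (p0.2.1 k)ᴴ⟩

/-- The linearization of the real moment map equation:
`ℒ(p,ξ)_k = Σ_{in(h)=k} [B_h(B_h† ξ_{in(h)} − ξ_{out(h)} B_h†) −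
(B_{h̄}† ξ_{out(h)} − ξ_{in(h)} B_{h̄}†) B_{h̄}] + i_k i_k† ξ_k + ξ_k j_k† j_k`. -/
def linL [Fintype E] (src tgt : E → Fin n) (bar : E → E) (v w : Fin n → ℕ)
    (hbs : ∀ h, src (bar h) = tgt h) (hbt : ∀ h, tgt (bar h) = src h)
    (p : Rep src tgt v w) (ξ : ∀ k : Fin n, Matrix (Fin (v k)) (Fin (v k)) ℂ)
    (k : Fin n) : Matrix (Fin (v k)) (Fin (v k)) ℂ :=
  (∑ h : E, if e : tgt h = k then
      castM2 v e e
        (p.1 h * ((p.1 h)ᴴ * ξ (tgt h) - ξ (src h) * (p.1 h)ᴴ)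
          - ((Bbar src tgt bar v w hbs hbt p h)ᴴ * ξ (src h)
              - ξ (tgt h) * (Bbar src tgt bar v w hbs hbt p h)ᴴ)
            * Bbar src tgt bar v w hbs hbt p h)
    else 0)
    + (p.2.1 k * (p.2.1 k)ᴴ * ξ k + ξ k * (p.2.2 k)ᴴ * p.2.2 k)

/-- The product of the matrices of `p` along a list of edges `[h_1, …, h_m]`, as a matrix
`V_a → V_b`; when the list is a path with `a = out(h_1)` and `b = in(h_m)` this is the genuine
composite `B_{h_m} ⋯ B_{h_1}`. -/
def prodAlong (src tgt : E → Fin n) (v w : Fin n → ℕ) (p : Rep src tgt v w) :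
    List E → (a : Fin n) → (b : Fin n) → Matrix (Fin (v b)) (Fin (v a)) ℂ
  | [], a, b => if e : a = b then castM2 v e rfl (1 : Matrix (Fin (v a)) (Fin (v a)) ℂ) else 0
  | (h : E) :: rest, a, b =>
      prodAlong src tgt v w p rest (tgt h) b *
        (if e : src h = a then castM2 v rfl e (p.1 h) else 0)

/-!
Since `ε(h̄) = -ε(h)`, the rotation sends the pair `(B_h, B_{h̄})` to
`(B_h - ε ξ B_{h̄}†, B_{h̄} + ε ξ B_h†)` with `ε = ε(h)`, and the framing pair `(i_k, j_k)` is
rotated by the same rule with `ε = 1`. Expanding these substitutions pair by pair gives, for every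
`q`, `μ_ℝ(q_ξ) = (1 - |ξ|²) μ_ℝ(q) - i ξ̄ μ_ℂ(q) - i ξ μ_ℂ(q)†` and
`μ_ℂ(q_ξ) = μ_ℂ(q) - 2 i ξ μ_ℝ(q) - ξ² μ_ℂ(q)†`; the theorem is the case `μ_ℂ(q) = 0`.
-/

section RotationIdentities

variable {R l m : Type*} [CommRing R] [StarRing R] [Fintype l]
variable {ε : R} (ξ : R) (B : Matrix m l R) (C : Matrix l m R)

theorem rotate_realMoment (hε : ε = 1 ∨ ε = -1) :
    (B - (ε * ξ) • Cᴴ) * (B - (ε * ξ) • Cᴴ)ᴴ - (C + (ε * ξ) • Bᴴ)ᴴ * (C + (ε * ξ) • Bᴴ)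
      = (1 - ξ * star ξ) • (B * Bᴴ - Cᴴ * C) - (2 * star ξ) • (ε • (B * C))
        - (2 * ξ) • (ε • (B * C))ᴴ := by
  rcases hε with rfl | rfl <;>
  · simp only [conjTranspose_sub, conjTranspose_add, conjTranspose_smul, conjTranspose_mul,
      conjTranspose_conjTranspose, star_mul', star_one, star_neg, Matrix.sub_mul, Matrix.mul_sub,
      Matrix.add_mul, Matrix.mul_add, Matrix.smul_mul, Matrix.mul_smul]
    module

theorem rotate_complexMoment (hε : ε = 1 ∨ ε = -1) :
    ε • ((B - (ε * ξ) • Cᴴ) * (C + (ε * ξ) • Bᴴ))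
      = ε • (B * C) + ξ • (B * Bᴴ - Cᴴ * C) - (ξ * ξ) • (ε • (B * C))ᴴ := by
  rcases hε with rfl | rfl <;>
  · simp only [conjTranspose_smul, conjTranspose_mul, star_one, star_neg, Matrix.sub_mul,
      Matrix.mul_add, Matrix.smul_mul, Matrix.mul_smul]
    module

end RotationIdentities

section Casts

variable {v : Fin n → ℕ}

@[simp]
theorem castM2_rfl {a b : Fin n} (M : Matrix (Fin (v a)) (Fin (v b)) ℂ) :
    castM2 v rfl rfl M = M := by
  ext; simp [castM2]

theorem castM2_castM2 {a b a' b' a'' b'' : Fin n} (ea : a = a') (eb : b = b')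
    (ea' : a' = a'') (eb' : b' = b'') (M : Matrix (Fin (v a)) (Fin (v b)) ℂ) :
    castM2 v ea' eb' (castM2 v ea eb M) = castM2 v (ea.trans ea') (eb.trans eb') M := by
  subst ea eb ea' eb'; simp

theorem conjTranspose_castM2 {a b a' b' : Fin n} (ea : a = a') (eb : b = b')
    (M : Matrix (Fin (v a)) (Fin (v b)) ℂ) : (castM2 v ea eb M)ᴴ = castM2 v eb ea Mᴴ := by
  subst ea eb; simp

theorem castM2_sub {a b a' b' : Fin n} (ea : a = a') (eb : b = b')
    (M N : Matrix (Fin (v a)) (Fin (v b)) ℂ) :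
    castM2 v ea eb (M - N) = castM2 v ea eb M - castM2 v ea eb N := by
  subst ea eb; simp

theorem castM2_smul {a b a' b' : Fin n} (ea : a = a') (eb : b = b') (c : ℂ)
    (M : Matrix (Fin (v a)) (Fin (v b)) ℂ) : castM2 v ea eb (c • M) = c • castM2 v ea eb M := by
  subst ea eb; simp

end Casts

section Quiver

variable {src tgt : E → Fin n} {bar : E → E} {Ω : E → Prop} [DecidablePred Ω] {v w : Fin n → ℕ}
  {hbs : ∀ h, src (bar h) = tgt h} {hbt : ∀ h, tgt (bar h) = src h}

theorem eps_eq_one_or_eq_neg_one (h : E) : eps Ω h = 1 ∨ eps Ω h = -1 := by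
  unfold eps; split_ifs <;> simp

theorem eps_bar (hor : ∀ h, Ω (bar h) ↔ ¬ Ω h) (h : E) : eps Ω (bar h) = -eps Ω h := by
  by_cases hh : Ω h <;> simp [eps, hh, hor]

theorem castM2_conjTranspose_edge (q : Rep src tgt v w) {h₁ h₂ : E} (e : h₁ = h₂)
    (es : src h₁ = src h₂) (et : tgt h₁ = tgt h₂) : castM2 v es et (q.1 h₁)ᴴ = (q.1 h₂)ᴴ := by
  subst e; simp

theorem Bbar_HK (hinv : ∀ h, bar (bar h) = h) (hor : ∀ h, Ω (bar h) ↔ ¬ Ω h)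
    (ξ : ℂ) (q : Rep src tgt v w) (h : E) :
    Bbar src tgt bar v w hbs hbt (HK src tgt bar Ω v w hbs hbt ξ q) h
      = Bbar src tgt bar v w hbs hbt q h + (eps Ω h * ξ) • (q.1 h)ᴴ := by
  have hback : castM2 v (hbt h) (hbs h) (Bbar src tgt bar v w hbs hbt q (bar h))ᴴ = (q.1 h)ᴴ := by
    rw [Bbar, conjTranspose_castM2, castM2_castM2]
    exact castM2_conjTranspose_edge q (hinv h) _ _
  rw [Bbar, HK, castM2_sub, castM2_smul, hback, eps_bar hor, neg_mul, neg_smul, sub_neg_eq_add]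
  rfl

variable (src tgt bar v w hbs hbt) in
def realEdge (p : Rep src tgt v w) (h : E) : Matrix (Fin (v (tgt h))) (Fin (v (tgt h))) ℂ :=
  p.1 h * (p.1 h)ᴴ - (Bbar src tgt bar v w hbs hbt p h)ᴴ * Bbar src tgt bar v w hbs hbt p h

variable (src tgt bar Ω v w hbs hbt) in
def complexEdge (p : Rep src tgt v w) (h : E) : Matrix (Fin (v (tgt h))) (Fin (v (tgt h))) ℂ :=
  eps Ω h • (p.1 h * Bbar src tgt bar v w hbs hbt p h)

theorem realEdge_HK (hinv : ∀ h, bar (bar h) = h) (hor : ∀ h, Ω (bar h) ↔ ¬ Ω h)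
    (ξ : ℂ) (q : Rep src tgt v w) (h : E) :
    realEdge src tgt bar v w hbs hbt (HK src tgt bar Ω v w hbs hbt ξ q) h
      = (1 - ξ * star ξ) • realEdge src tgt bar v w hbs hbt q h
        - (2 * star ξ) • complexEdge src tgt bar Ω v w hbs hbt q h
        - (2 * ξ) • (complexEdge src tgt bar Ω v w hbs hbt q h)ᴴ := by
  rw [realEdge, Bbar_HK hinv hor]
  exact rotate_realMoment ξ _ _ (eps_eq_one_or_eq_neg_one h)

theorem complexEdge_HK (hinv : ∀ h, bar (bar h) = h) (hor : ∀ h, Ω (bar h) ↔ ¬ Ω h)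
    (ξ : ℂ) (q : Rep src tgt v w) (h : E) :
    complexEdge src tgt bar Ω v w hbs hbt (HK src tgt bar Ω v w hbs hbt ξ q) h
      = complexEdge src tgt bar Ω v w hbs hbt q h
        + ξ • realEdge src tgt bar v w hbs hbt q h
        - (ξ * ξ) • (complexEdge src tgt bar Ω v w hbs hbt q h)ᴴ := by
  rw [complexEdge, Bbar_HK hinv hor]
  exact rotate_complexMoment ξ _ _ (eps_eq_one_or_eq_neg_one h)

variable [Fintype E]

def sumInto (tgt : E → Fin n) (v : Fin n → ℕ)
    (X : ∀ h : E, Matrix (Fin (v (tgt h))) (Fin (v (tgt h))) ℂ) (k : Fin n) :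
    Matrix (Fin (v k)) (Fin (v k)) ℂ :=
  ∑ h : E, if e : tgt h = k then castM2 v e e (X h) else 0

theorem sumInto_sub (X Y : ∀ h : E, Matrix (Fin (v (tgt h))) (Fin (v (tgt h))) ℂ) (k : Fin n) :
    sumInto tgt v (fun h => X h - Y h) k = sumInto tgt v X k - sumInto tgt v Y k := by
  rw [sumInto, sumInto, sumInto, ← Finset.sum_sub_distrib]
  refine Finset.sum_congr rfl fun h _ => ?_
  split_ifs with e
  · subst e; simp
  · simp

theorem sumInto_add (X Y : ∀ h : E, Matrix (Fin (v (tgt h))) (Fin (v (tgt h))) ℂ) (k : Fin n) :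
    sumInto tgt v (fun h => X h + Y h) k = sumInto tgt v X k + sumInto tgt v Y k := by
  rw [sumInto, sumInto, sumInto, ← Finset.sum_add_distrib]
  refine Finset.sum_congr rfl fun h _ => ?_
  split_ifs with e
  · subst e; simp
  · simp

theorem sumInto_smul (c : ℂ) (X : ∀ h : E, Matrix (Fin (v (tgt h))) (Fin (v (tgt h))) ℂ)
    (k : Fin n) : sumInto tgt v (fun h => c • X h) k = c • sumInto tgt v X k := by
  rw [sumInto, sumInto, Finset.smul_sum]
  refine Finset.sum_congr rfl fun h _ => ?_
  split_ifs with e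
  · subst e; simp
  · simp

theorem sumInto_conjTranspose (X : ∀ h : E, Matrix (Fin (v (tgt h))) (Fin (v (tgt h))) ℂ)
    (k : Fin n) : sumInto tgt v (fun h => (X h)ᴴ) k = (sumInto tgt v X k)ᴴ := by
  rw [sumInto, sumInto, conjTranspose_sum]
  refine Finset.sum_congr rfl fun h _ => ?_
  split_ifs with e
  · subst e; simp
  · simp

theorem muR_eq_sumInto (p : Rep src tgt v w) (k : Fin n) :
    muR src tgt bar v w hbs hbt p k = (Complex.I / 2) •
      (sumInto tgt v (realEdge src tgt bar v w hbs hbt p) k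
        + (p.2.1 k * (p.2.1 k)ᴴ - (p.2.2 k)ᴴ * p.2.2 k)) := rfl

theorem muC_eq_sumInto (p : Rep src tgt v w) (k : Fin n) :
    muC src tgt bar Ω v w hbs hbt p k
      = sumInto tgt v (complexEdge src tgt bar Ω v w hbs hbt p) k + p.2.1 k * p.2.2 k := by
  simp only [muC, sumInto, complexEdge, castM2_smul]

theorem muR_HK (hinv : ∀ h, bar (bar h) = h) (hor : ∀ h, Ω (bar h) ↔ ¬ Ω h)
    (ξ : ℂ) (q : Rep src tgt v w) (k : Fin n) :
    muR src tgt bar v w hbs hbt (HK src tgt bar Ω v w hbs hbt ξ q) k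
      = (1 - ξ * star ξ) • muR src tgt bar v w hbs hbt q k
        - (Complex.I * star ξ) • muC src tgt bar Ω v w hbs hbt q k
        - (Complex.I * ξ) • (muC src tgt bar Ω v w hbs hbt q k)ᴴ := by
  have hframing := rotate_realMoment ξ (q.2.1 k) (q.2.2 k) (Or.inl rfl)
  simp only [one_mul, one_smul] at hframing
  rw [muR_eq_sumInto, muR_eq_sumInto, muC_eq_sumInto, funext (realEdge_HK hinv hor ξ q),
    sumInto_sub, sumInto_sub, sumInto_smul, sumInto_smul, sumInto_smul, sumInto_conjTranspose]
  dsimp only [HK]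
  rw [hframing, conjTranspose_add]
  module

theorem muC_HK (hinv : ∀ h, bar (bar h) = h) (hor : ∀ h, Ω (bar h) ↔ ¬ Ω h)
    (ξ : ℂ) (q : Rep src tgt v w) (k : Fin n) :
    muC src tgt bar Ω v w hbs hbt (HK src tgt bar Ω v w hbs hbt ξ q) k
      = muC src tgt bar Ω v w hbs hbt q k
        - (2 * Complex.I * ξ) • muR src tgt bar v w hbs hbt q k
        - (ξ * ξ) • (muC src tgt bar Ω v w hbs hbt q k)ᴴ := by
  have hframing := rotate_complexMoment ξ (q.2.1 k) (q.2.2 k) (Or.inl rfl)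
  simp only [one_mul, one_smul] at hframing
  rw [muC_eq_sumInto, muC_eq_sumInto, muR_eq_sumInto, funext (complexEdge_HK hinv hor ξ q),
    sumInto_sub, sumInto_add, sumInto_smul, sumInto_smul, sumInto_conjTranspose]
  dsimp only [HK]
  rw [hframing, conjTranspose_add]
  rw [smul_smul (2 * Complex.I * ξ),
    show 2 * Complex.I * ξ * (Complex.I / 2) = -ξ by linear_combination ξ * Complex.I_mul_I]
  module

end Quiver

theorem HK_moment_maps_general {n : ℕ} {E : Type*} [Fintype E]
    (src tgt : E → Fin n) (bar : E → E) (Ω : E → Prop) [DecidablePred Ω]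
    (v w : Fin n → ℕ)
    (hinv : ∀ h, bar (bar h) = h)
    (hbs : ∀ h, src (bar h) = tgt h) (hbt : ∀ h, tgt (bar h) = src h)
    (hor : ∀ h, Ω (bar h) ↔ ¬ Ω h)
    (ζ : ∀ k : Fin n, Matrix (Fin (v k)) (Fin (v k)) ℂ)
    (q : Rep src tgt v w)
    (hqR : ∀ k, muR src tgt bar v w hbs hbt q k = ζ k)
    (hqC : ∀ k, muC src tgt bar Ω v w hbs hbt q k = 0)
    (ξ : ℂ) :
    (∀ k, muR src tgt bar v w hbs hbt (HK src tgt bar Ω v w hbs hbt ξ q) k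
        = ((1 : ℂ) - ((‖ξ‖ : ℝ) : ℂ) ^ 2) • ζ k)
    ∧ (∀ k, muC src tgt bar Ω v w hbs hbt (HK src tgt bar Ω v w hbs hbt ξ q) k
        = (-(2 * Complex.I * ξ)) • ζ k) := by
  refine ⟨fun k => ?_, fun k => ?_⟩
  · rw [muR_HK hinv hor, hqR, hqC, ← Complex.mul_conj']
    simp
  · rw [muC_HK hinv hor, hqR, hqC]
    simp

/-- if `μ_ℝ(q) = ζ_ℝ` and `μ_ℂ(q) = 0`, then the hyperkähler rotation
`q_ξ = HK_ξ(q)` satisfies `μ_ℝ(q_ξ)_k = (1 − |ξ|²)·ζ_ℝ^k` and `μ_ℂ(q_ξ)_k = −2i·ξ·ζ_ℝ^k`. -/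
theorem HK_moment_maps {n : ℕ} {E : Type*} [Fintype E]
    (src tgt : E → Fin n) (bar : E → E) (Ω : E → Prop) [DecidablePred Ω]
    (v w : Fin n → ℕ)
    (hloop : ∀ h, src h ≠ tgt h)
    (hinv : ∀ h, bar (bar h) = h) (hfree : ∀ h, bar h ≠ h)
    (hbs : ∀ h, src (bar h) = tgt h) (hbt : ∀ h, tgt (bar h) = src h)
    (hor : ∀ h, Ω (bar h) ↔ ¬ Ω h)
    (ζ : ∀ k : Fin n, Matrix (Fin (v k)) (Fin (v k)) ℂ)
    (q : Rep src tgt v w)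
    (hqR : ∀ k, muR src tgt bar v w hbs hbt q k = ζ k)
    (hqC : ∀ k, muC src tgt bar Ω v w hbs hbt q k = 0)
    (ξ : ℂ) :
    (∀ k, muR src tgt bar v w hbs hbt (HK src tgt bar Ω v w hbs hbt ξ q) k
        = ((1 : ℂ) - ((‖ξ‖ : ℝ) : ℂ) ^ 2) • ζ k)
    ∧ (∀ k, muC src tgt bar Ω v w hbs hbt (HK src tgt bar Ω v w hbs hbt ξ q) k
        = (-(2 * Complex.I * ξ)) • ζ k) :=
  HK_moment_maps_general src tgt bar Ω v w hinv hbs hbt hor ζ q hqR hqC ξ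

end

end QuiverCL
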